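/- arXiv:1708.03366 — 6 statements merged into one kernel-verified Lean document; each statement's English description precedes it below -/
import Mathlib

section
/- Let φ be a loss function of class S, let N⁺, N⁻ ≥ 1 be integers, and let α = (α⁺, α⁻) with α⁺ ≤ N⁺ and α⁻ ≤ N⁻. If 2α⁺ ≥ N⁺ or 2α⁻ ≥ N⁻, then there exist a linearly separable training set (D⁺, D⁻) of feature vectors in ℝ² with card D⁺ = N⁺ and card D⁻ = N⁻, and an α-bounded feature attack (E⁺, E⁻) on (D⁺, D⁻), such that the infimum over all affine classifiers h of the φ-risk of h on (E⁺, E⁻) equals the infimum of the φ-risk on (E⁺, E⁻) taken over those affine classifiers h that misclassify every element of D⁺ or misclassify every element of D⁻. (Hence any empirical-risk-minimizing algorithm using a loss of class S is perfectly attackable under this attack condition.) -/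
open scoped Classical BigOperators

/-- Value of the affine classifier `h = (w, b)` at feature vector `x`. -/
noncomputable def hval {p : ℕ} (h : (Fin p → ℝ) × ℝ) (x : Fin p → ℝ) : ℝ :=
  (∑ i, h.1 i * x i) + h.2

/-- Number of positive feature vectors in `S` misclassified by `h` (with multiplicity). -/
noncomputable def errPos {p : ℕ} (h : (Fin p → ℝ) × ℝ) (S : Multiset (Fin p → ℝ)) : ℕ :=
  Multiset.countP (fun x => hval h x ≤ 0) S

/-- Number of negative feature vectors in `S` misclassified by `h` (with multiplicity). -/
noncomputable def errNeg {p : ℕ} (h : (Fin p → ℝ) × ℝ) (S : Multiset (Fin p → ℝ)) : ℕ :=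
  Multiset.countP (fun x => 0 < hval h x) S

/-- `(Ep, En)` is an `(ap, an)`-bounded feature attack on `(Dp, Dn)`. -/
noncomputable def IsBFA {p : ℕ} (ap an : ℕ) (Dp Dn Ep En : Multiset (Fin p → ℝ)) : Prop :=
  Multiset.card Ep = Multiset.card Dp ∧
  Multiset.card En = Multiset.card Dn ∧
  Multiset.card (Ep - Dp) ≤ ap ∧
  Multiset.card (En - Dn) ≤ an

/-- `(Dp, Dn)` is linearly separable. -/
def LinSep {p : ℕ} (Dp Dn : Multiset (Fin p → ℝ)) : Prop :=
  ∃ h : (Fin p → ℝ) × ℝ, errPos h Dp = 0 ∧ errNeg h Dn = 0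

/-- `h` satisfies the majority constraint on `(Ep, En)`. -/
def Majority {p : ℕ} (h : (Fin p → ℝ) × ℝ) (Ep En : Multiset (Fin p → ℝ)) : Prop :=
  2 * errPos h Ep < Multiset.card Ep ∧ 2 * errNeg h En < Multiset.card En

/-- The φ-risk of the affine classifier `h` on attacked data `(Ep, En)`. -/
noncomputable def risk {p : ℕ} (φ : ℝ → ℝ) (h : (Fin p → ℝ) × ℝ)
    (Ep En : Multiset (Fin p → ℝ)) : ℝ :=
  (Ep.map fun x => φ (hval h x)).sum + (En.map fun x => φ (-(hval h x))).sum

/-!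
Place the class to be attacked at `-v` and the other class at `0`, and let the attacker move at
least half of the attacked class from `-v` to `v`. Since `h (-v) + h v = 2 h 0`, an affine
classifier that is right on both clean classes is wrong at `v`; its reflection `x ↦ h (-x)` is
then wrong on the whole clean attacked class, and because the majority of the attacked points sit
at `v`, the reflection has no larger risk for any antitone loss. So the classifiers misclassifying
a whole clean class already attain the infimum of the risk.
-/

open Multiset

section Affine

variable {p : ℕ}

lemma hval_neg_weight (h : (Fin p → ℝ) × ℝ) (x : Fin p → ℝ) :
    hval (-h.1, h.2) x = hval h (-x) := by
  simp [hval]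

lemma hval_neg_add_hval (h : (Fin p → ℝ) × ℝ) (x : Fin p → ℝ) :
    hval h (-x) + hval h x = 2 * hval h 0 := by
  simp only [hval, Pi.neg_apply, mul_neg, Finset.sum_neg_distrib, Pi.zero_apply, mul_zero,
    Finset.sum_const_zero]
  ring

lemma errPos_replicate_of_nonpos {h : (Fin p → ℝ) × ℝ} {x : Fin p → ℝ}
    (hx : hval h x ≤ 0) (n : ℕ) : errPos h (replicate n x) = card (replicate n x) :=
  countP_eq_card.2 fun _ hy => eq_of_mem_replicate hy ▸ hx

lemma errNeg_replicate_of_pos {h : (Fin p → ℝ) × ℝ} {x : Fin p → ℝ} (hx : 0 < hval h x)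
    (n : ℕ) : errNeg h (replicate n x) = card (replicate n x) :=
  countP_eq_card.2 fun _ hy => eq_of_mem_replicate hy ▸ hx

lemma linSep_replicate_of_ne {x y : Fin p → ℝ} (hxy : x ≠ y) (m n : ℕ) :
    LinSep (replicate m x) (replicate n y) := by
  obtain ⟨j, hj⟩ := Function.ne_iff.1 hxy
  set w := x - y
  -- the perpendicular bisector of the segment `[x, y]`
  let h : (Fin p → ℝ) × ℝ := (w, -(∑ i, w i * x i + ∑ i, w i * y i) / 2)
  have hgap : 0 < ∑ i, w i * x i - ∑ i, w i * y i := by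
    rw [← Finset.sum_sub_distrib]
    refine Finset.sum_pos' (fun i _ => ?_) ⟨j, Finset.mem_univ j, ?_⟩
    · simpa [w, ← mul_sub] using mul_self_nonneg (x i - y i)
    · simpa [w, ← mul_sub] using mul_self_pos.2 (sub_ne_zero.2 hj)
  have hx : hval h x = (∑ i, w i * x i - ∑ i, w i * y i) / 2 := by simp only [hval, h]; ring
  have hy : hval h y = -(∑ i, w i * x i - ∑ i, w i * y i) / 2 := by simp only [hval, h]; ring
  refine ⟨h, countP_eq_zero.2 fun z hz => ?_, countP_eq_zero.2 fun z hz => ?_⟩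
  · rw [eq_of_mem_replicate hz, hx, not_le]
    positivity
  · rw [eq_of_mem_replicate hz, hy, not_lt]
    linarith

end Affine

lemma card_replicate_sub_add_replicate_sub_le {α : Type*} [DecidableEq α] (x y : α) (n a : ℕ) :
    card (replicate (n - a) x + replicate a y - replicate n x) ≤ a := by
  have hmoved : replicate (n - a) x + replicate a y - replicate n x ≤ replicate a y := by
    rw [Multiset.sub_le_iff_le_add, add_comm]
    exact add_le_add_right ((replicate_le_replicate _).2 (Nat.sub_le _ _)) _
  simpa using card_le_card hmoved

/-- No boundedness is needed: in a conditionally complete linear order every set that is not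
bounded below has the junk infimum `sInf ∅`. -/
lemma sInf_range_eq_sInf_image_of_forall_exists_le {α β : Type*}
    [ConditionallyCompleteLinearOrder β] (f : α → β) (s : Set α)
    (hdom : ∀ a, ∃ b ∈ s, f b ≤ f a) :
    sInf (Set.range f) = sInf (f '' s) := by
  refine csInf_eq_csInf_of_forall_exists_le ?_ ?_
  · rintro _ ⟨a, rfl⟩
    obtain ⟨b, hb, hba⟩ := hdom a
    exact ⟨f b, Set.mem_image_of_mem f hb, hba⟩
  · rintro _ ⟨b, -, rfl⟩
    exact ⟨f b, Set.mem_range_self b, le_rfl⟩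

lemma Antitone.mul_add_mul_le_mul_add_mul {φ : ℝ → ℝ} (hφ : Antitone φ) {a b s r : ℝ}
    (hab : a ≤ b) (hsr : s ≤ r) : a * φ s + b * φ r ≤ a * φ r + b * φ s := by
  nlinarith [mul_nonneg (sub_nonneg.2 hab) (sub_nonneg.2 (hφ hsr))]

section Attack

variable {p : ℕ} (φ : ℝ → ℝ) (v : Fin p → ℝ)

lemma risk_replicate_attacked_pos (A B n : ℕ) (h : (Fin p → ℝ) × ℝ) :
    risk φ h (replicate A (-v) + replicate B v) (replicate n 0) =
      A * φ (hval h (-v)) + B * φ (hval h v) + n * φ (-hval h 0) := by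
  simp only [risk, map_add, map_replicate, sum_add, sum_replicate, nsmul_eq_mul]

lemma risk_replicate_attacked_neg (A B m : ℕ) (h : (Fin p → ℝ) × ℝ) :
    risk φ h (replicate m 0) (replicate A (-v) + replicate B v) =
      m * φ (hval h 0) + (A * φ (-hval h (-v)) + B * φ (-hval h v)) := by
  simp only [risk, map_add, map_replicate, sum_add, sum_replicate, nsmul_eq_mul]

variable {φ}

lemma exists_misclassifying_risk_le_of_attacked_pos (hφ : Antitone φ) {A B : ℕ} (hAB : A ≤ B)
    (m n : ℕ) (h : (Fin p → ℝ) × ℝ) :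
    ∃ h' : (Fin p → ℝ) × ℝ,
      (errPos h' (replicate m (-v)) = card (replicate m (-v)) ∨
        errNeg h' (replicate n 0) = card (replicate n (0 : Fin p → ℝ))) ∧
      risk φ h' (replicate A (-v) + replicate B v) (replicate n 0) ≤
        risk φ h (replicate A (-v) + replicate B v) (replicate n 0) := by
  by_cases hneg : hval h (-v) ≤ 0
  · exact ⟨h, Or.inl (errPos_replicate_of_nonpos hneg m), le_rfl⟩
  by_cases hzero : 0 < hval h 0
  · exact ⟨h, Or.inr (errNeg_replicate_of_pos hzero n), le_rfl⟩
  have hv : hval h v < 0 := by linarith [hval_neg_add_hval h v]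
  have hflip_neg : hval (-h.1, h.2) (-v) = hval h v := by rw [hval_neg_weight, neg_neg]
  refine ⟨(-h.1, h.2), Or.inl (errPos_replicate_of_nonpos (hflip_neg ▸ hv.le) m), ?_⟩
  rw [risk_replicate_attacked_pos, risk_replicate_attacked_pos, hflip_neg, hval_neg_weight,
    hval_neg_weight, neg_zero]
  linarith [hφ.mul_add_mul_le_mul_add_mul (Nat.cast_le.2 hAB)
    (by linarith : hval h v ≤ hval h (-v))]

lemma exists_misclassifying_risk_le_of_attacked_neg (hφ : Antitone φ) {A B : ℕ} (hAB : A ≤ B)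
    (m n : ℕ) (h : (Fin p → ℝ) × ℝ) :
    ∃ h' : (Fin p → ℝ) × ℝ,
      (errPos h' (replicate m 0) = card (replicate m (0 : Fin p → ℝ)) ∨
        errNeg h' (replicate n (-v)) = card (replicate n (-v))) ∧
      risk φ h' (replicate m 0) (replicate A (-v) + replicate B v) ≤
        risk φ h (replicate m 0) (replicate A (-v) + replicate B v) := by
  by_cases hzero : hval h 0 ≤ 0
  · exact ⟨h, Or.inl (errPos_replicate_of_nonpos hzero m), le_rfl⟩
  by_cases hneg : 0 < hval h (-v)
  · exact ⟨h, Or.inr (errNeg_replicate_of_pos hneg n), le_rfl⟩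
  have hv : 0 < hval h v := by linarith [hval_neg_add_hval h v]
  have hflip_neg : hval (-h.1, h.2) (-v) = hval h v := by rw [hval_neg_weight, neg_neg]
  refine ⟨(-h.1, h.2), Or.inr (errNeg_replicate_of_pos (hflip_neg ▸ hv) n), ?_⟩
  rw [risk_replicate_attacked_neg, risk_replicate_attacked_neg, hflip_neg, hval_neg_weight,
    hval_neg_weight, neg_zero]
  linarith [hφ.mul_add_mul_le_mul_add_mul (Nat.cast_le.2 hAB)
    (by linarith : -hval h v ≤ -hval h (-v))]

end Attack

theorem stmt4_general (φ : ℝ → ℝ) (hanti : Antitone φ)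
    (Np Nn ap an : ℕ)
    (hap : ap ≤ Np) (han : an ≤ Nn)
    (hcond : Np ≤ 2 * ap ∨ Nn ≤ 2 * an) :
    ∃ Dp Dn Ep En : Multiset (Fin 2 → ℝ),
      Multiset.card Dp = Np ∧ Multiset.card Dn = Nn ∧
      LinSep Dp Dn ∧ IsBFA ap an Dp Dn Ep En ∧
      sInf (Set.range fun h : (Fin 2 → ℝ) × ℝ => risk φ h Ep En) =
        sInf ((fun h : (Fin 2 → ℝ) × ℝ => risk φ h Ep En) ''
          {h | errPos h Dp = Multiset.card Dp ∨ errNeg h Dn = Multiset.card Dn}) := by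
  have hv : (-1 : Fin 2 → ℝ) ≠ 0 := neg_ne_zero.2 one_ne_zero
  rcases hcond with hpos | hneg
  · refine ⟨replicate Np (-1), replicate Nn 0, replicate (Np - ap) (-1) + replicate ap 1,
      replicate Nn 0, card_replicate _ _, card_replicate _ _, linSep_replicate_of_ne hv _ _,
      ⟨by simp [hap], rfl, card_replicate_sub_add_replicate_sub_le _ _ _ _, by simp⟩,
      sInf_range_eq_sInf_image_of_forall_exists_le _ _ fun h => ?_⟩
    exact exists_misclassifying_risk_le_of_attacked_pos 1 hanti (by omega : Np - ap ≤ ap) Np Nn h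
  · refine ⟨replicate Np 0, replicate Nn (-1), replicate Np 0,
      replicate (Nn - an) (-1) + replicate an 1, card_replicate _ _, card_replicate _ _,
      linSep_replicate_of_ne hv.symm _ _,
      ⟨rfl, by simp [han], by simp, card_replicate_sub_add_replicate_sub_le _ _ _ _⟩,
      sInf_range_eq_sInf_image_of_forall_exists_le _ _ fun h => ?_⟩
    exact exists_misclassifying_risk_le_of_attacked_neg 1 hanti (by omega : Nn - an ≤ an) Np Nn h

theorem stmt4 (φ : ℝ → ℝ) (hanti : Antitone φ)
    (hge : ∀ t : ℝ, t ≤ 0 → 1 ≤ φ t) (h0 : φ 0 = 1)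
    (c : ℝ) (hc : c < 1) (hlim : Filter.Tendsto φ Filter.atTop (nhds c))
    (Np Nn ap an : ℕ) (hNp : 1 ≤ Np) (hNn : 1 ≤ Nn)
    (hap : ap ≤ Np) (han : an ≤ Nn)
    (hcond : Np ≤ 2 * ap ∨ Nn ≤ 2 * an) :
    ∃ Dp Dn Ep En : Multiset (Fin 2 → ℝ),
      Multiset.card Dp = Np ∧ Multiset.card Dn = Nn ∧
      LinSep Dp Dn ∧ IsBFA ap an Dp Dn Ep En ∧
      sInf (Set.range fun h : (Fin 2 → ℝ) × ℝ => risk φ h Ep En) =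
        sInf ((fun h : (Fin 2 → ℝ) × ℝ => risk φ h Ep En) ''
          {h | errPos h Dp = Multiset.card Dp ∨ errNeg h Dn = Multiset.card Dn}) :=
  stmt4_general φ hanti Np Nn ap an hap han hcond
end

section
/- Let φ be a convex loss of class S, let N⁺, N⁻ ≥ 1 be integers, and let α = (α⁺, α⁻) with α⁺ ≤ N⁺ and α⁻ ≤ N⁻. If α⁺ ≥ 1 or α⁻ ≥ 1, then there exist a linearly separable training set (D⁺, D⁻) of feature vectors in ℝ² with card D⁺ = N⁺ and card D⁻ = N⁻, and an α-bounded feature attack (E⁺, E⁻) on (D⁺, D⁻), such that the infimum over all affine classifiers h of the φ-risk of h on (E⁺, E⁻) equals the infimum of the φ-risk on (E⁺, E⁻) taken over those affine classifiers h that misclassify every element of D⁺ or misclassify every element of D⁻. (Thus convex-loss linear classification is perfectly attackable as soon as the attacker can tamper a single feature vector.) -/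
open scoped Classical BigOperators

/-- If every classifier is dominated by one in `C`, the two infima agree. -/
private lemma sInf_eq_of_dominated {α : Type*} [Nonempty α] (f : α → ℝ) (C : Set α)
    (hbdd : BddBelow (Set.range f))
    (hkey : ∀ h : α, ∃ h' ∈ C, f h' ≤ f h) :
    sInf (Set.range f) = sInf (f '' C) := by
  have hCne : C.Nonempty := by
    obtain ⟨h', h'C, _⟩ := hkey (Classical.arbitrary α); exact ⟨h', h'C⟩
  have hsub : f '' C ⊆ Set.range f := Set.image_subset_range f C
  refine le_antisymm (csInf_le_csInf hbdd (hCne.image f) hsub)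
    (le_csInf (Set.range_nonempty f) ?_)
  rintro r ⟨h, rfl⟩
  obtain ⟨h', hh', hle⟩ := hkey h
  exact le_trans (csInf_le (hbdd.mono hsub) ⟨h', hh', rfl⟩) hle

set_option maxHeartbeats 2000000 in
theorem stmt5 (φ : ℝ → ℝ) (hconv : ConvexOn ℝ Set.univ φ) (hanti : Antitone φ)
    (hge : ∀ t : ℝ, t ≤ 0 → 1 ≤ φ t) (h0 : φ 0 = 1)
    (c : ℝ) (hc : c < 1) (hlim : Filter.Tendsto φ Filter.atTop (nhds c))
    (Np Nn ap an : ℕ) (hNp : 1 ≤ Np) (hNn : 1 ≤ Nn)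
    (hap : ap ≤ Np) (han : an ≤ Nn)
    (hcond : 1 ≤ ap ∨ 1 ≤ an) :
    ∃ Dp Dn Ep En : Multiset (Fin 2 → ℝ),
      Multiset.card Dp = Np ∧ Multiset.card Dn = Nn ∧
      LinSep Dp Dn ∧ IsBFA ap an Dp Dn Ep En ∧
      sInf (Set.range fun h : (Fin 2 → ℝ) × ℝ => risk φ h Ep En) =
        sInf ((fun h : (Fin 2 → ℝ) × ℝ => risk φ h Ep En) ''
          {h | errPos h Dp = Multiset.card Dp ∨ errNeg h Dn = Multiset.card Dn}) := by
  classical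
  -- a point where φ < 1
  obtain ⟨t₀, ht₀lt, ht₀pos⟩ :=
    ((hlim.eventually_lt_const hc).and (Filter.eventually_gt_atTop (0:ℝ))).exists
  obtain ⟨k, hkdef⟩ : ∃ k : ℝ, k = (1 - φ t₀) / t₀ := ⟨_, rfl⟩
  have hkpos : 0 < k := hkdef ▸ div_pos (by linarith) ht₀pos
  obtain ⟨K, hKdef⟩ : ∃ K : ℝ, K = φ (-1) - 1 := ⟨_, rfl⟩
  have hK0 : 0 ≤ K := by have := hge (-1) (by norm_num); simp only [hKdef]; linarith
  -- global lower bound φ ≥ c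
  have hφc : ∀ x : ℝ, c ≤ φ x := fun x =>
    le_of_tendsto hlim (Filter.eventually_atTop.2 ⟨x, fun t ht => hanti ht⟩)
  -- Lemma A : supporting bound on the right of 0
  have lemA : ∀ p : ℝ, 0 < p → 1 - K * p ≤ φ p := by
    intro p hp
    have hs := hconv.slope_mono_adjacent (Set.mem_univ (-1:ℝ)) (Set.mem_univ p)
      (by norm_num : (-1:ℝ) < 0) hp
    rw [h0, show (0:ℝ) - (-1) = 1 by ring, show p - 0 = p by ring, div_one,
      le_div_iff₀ hp] at hs
    simp only [hKdef]
    nlinarith [hs]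
  -- Lemma B : linear growth to the left of any nonpositive point
  have lemB : ∀ x δ : ℝ, x ≤ 0 → 0 ≤ δ → φ x + k * δ ≤ φ (x - δ) := by
    intro x δ hx hδ
    rcases eq_or_lt_of_le hδ with h | hδpos
    · simp [← h]
    have hk' : (φ t₀ - 1) / t₀ = -k := by rw [hkdef]; ring
    have hxx : x - δ < x := by linarith
    have hslope : (φ x - φ (x - δ)) / (x - (x - δ)) ≤ (φ t₀ - 1) / t₀ := by
      rcases lt_or_eq_of_le hx with hxneg | hx0
      · have h1 := hconv.slope_mono_adjacent (Set.mem_univ (x - δ)) (Set.mem_univ (0:ℝ))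
          hxx hxneg
        have h2 := hconv.slope_mono_adjacent (Set.mem_univ x) (Set.mem_univ t₀)
          hxneg (by linarith : (0:ℝ) < t₀)
        rw [h0] at h1 h2
        calc (φ x - φ (x - δ)) / (x - (x - δ)) ≤ (1 - φ x) / (0 - x) := h1
          _ ≤ (φ t₀ - 1) / (t₀ - 0) := h2
          _ = (φ t₀ - 1) / t₀ := by rw [sub_zero]
      · have h1 := hconv.slope_mono_adjacent (Set.mem_univ (x - δ)) (Set.mem_univ t₀)
          hxx (by linarith : x < t₀)
        calc (φ x - φ (x - δ)) / (x - (x - δ)) ≤ (φ t₀ - φ x) / (t₀ - x) := h1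
          _ = (φ t₀ - 1) / t₀ := by rw [hx0, h0, sub_zero]
    rw [show x - (x - δ) = δ by ring, hk', div_le_iff₀ hδpos] at hslope
    linarith
  -- the separating classifier for the clean data
  have hsep : LinSep (p := 2) (Multiset.replicate Np ![(1:ℝ), 0]) (Multiset.replicate Nn ![(-1:ℝ), 0]) := by
    refine ⟨(![1, 0], 0), ?_, ?_⟩
    · unfold errPos
      rw [Multiset.countP_eq_zero]
      intro a ha
      rw [Multiset.eq_of_mem_replicate ha]
      simp [hval, Fin.sum_univ_two]
    · unfold errNeg
      rw [Multiset.countP_eq_zero]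
      intro a ha
      rw [Multiset.eq_of_mem_replicate ha]
      simp [hval, Fin.sum_univ_two]
  rcases hcond with hap1 | han1
  · -- Case 1 : the attacker may move one positive point
    obtain ⟨m, rfl⟩ : ∃ m, Np = m + 1 := ⟨Np - 1, (Nat.succ_pred_eq_of_pos hNp).symm⟩
    obtain ⟨T, hTdef⟩ : ∃ T : ℝ, T = 1 + 2 * ((m:ℝ) + 1) * K / k := ⟨_, rfl⟩
    have hT1 : (1:ℝ) ≤ T := by
      have h' : 0 ≤ 2 * ((m:ℝ) + 1) * K / k := by positivity
      rw [hTdef]; linarith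
    obtain ⟨A, hA⟩ : ∃ v : Fin 2 → ℝ, v = ![1, 0] := ⟨_, rfl⟩
    obtain ⟨B, hB⟩ : ∃ v : Fin 2 → ℝ, v = ![-1, 0] := ⟨_, rfl⟩
    obtain ⟨Z, hZ⟩ : ∃ v : Fin 2 → ℝ, v = ![-T, 0] := ⟨_, rfl⟩
    -- value computations
    have hvA : ∀ h : (Fin 2 → ℝ) × ℝ, hval h A = h.1 0 + h.2 := by
      intro h
      rw [hA]; simp [hval, Fin.sum_univ_two]
    have hvB : ∀ h : (Fin 2 → ℝ) × ℝ, hval h B = -(h.1 0) + h.2 := by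
      intro h
      rw [hB]; simp [hval, Fin.sum_univ_two]
    have hvZ : ∀ h : (Fin 2 → ℝ) × ℝ, hval h Z = -(h.1 0 * T) + h.2 := by
      intro h
      rw [hZ]; simp [hval, Fin.sum_univ_two]
    have hrisk : ∀ h : (Fin 2 → ℝ) × ℝ,
        risk φ h (Multiset.replicate m A + {Z}) (Multiset.replicate Nn B)
          = (m:ℝ) * φ (hval h A) + φ (hval h Z) + (Nn:ℝ) * φ (-(hval h B)) := by
      intro h
      simp [risk, Multiset.sum_replicate, nsmul_eq_mul]
    have herrP : ∀ h : (Fin 2 → ℝ) × ℝ, hval h A ≤ 0 →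
        errPos h (Multiset.replicate (m+1) A)
          = Multiset.card (Multiset.replicate (m+1) A) := by
      intro h hh
      unfold errPos
      exact Multiset.countP_eq_card.2 fun a ha => by
        rw [Multiset.eq_of_mem_replicate ha]; exact hh
    have herrN : ∀ h : (Fin 2 → ℝ) × ℝ, 0 < hval h B →
        errNeg h (Multiset.replicate Nn B)
          = Multiset.card (Multiset.replicate Nn B) := by
      intro h hh
      unfold errNeg
      exact Multiset.countP_eq_card.2 fun a ha => by
        rw [Multiset.eq_of_mem_replicate ha]; exact hh
    refine ⟨Multiset.replicate (m+1) A, Multiset.replicate Nn B,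
      Multiset.replicate m A + {Z}, Multiset.replicate Nn B, by simp, by simp, by rw [hA, hB]; exact hsep,
      ⟨by simp, rfl, ?_, by simp⟩, ?_⟩
    · -- attack budget
      have hsub1 : Multiset.replicate m A + {Z} - Multiset.replicate (m+1) A ≤ {Z} := by
        calc Multiset.replicate m A + {Z} - Multiset.replicate (m+1) A
            ≤ Multiset.replicate m A + {Z} - Multiset.replicate m A :=
              tsub_le_tsub_left ((Multiset.replicate_le_replicate A).2 (Nat.le_succ m)) _
          _ = {Z} := add_tsub_cancel_left _ _
      exact le_trans (Multiset.card_le_card hsub1) (by simpa using hap1)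
    · -- the two infima agree
      have hbdd : BddBelow (Set.range fun h : (Fin 2 → ℝ) × ℝ =>
          risk φ h (Multiset.replicate m A + {Z}) (Multiset.replicate Nn B)) := by
        refine ⟨(m:ℝ) * c + c + (Nn:ℝ) * c, ?_⟩
        rintro r ⟨h, rfl⟩
        dsimp only
        rw [hrisk h]
        nlinarith [Nat.cast_nonneg (α := ℝ) m, Nat.cast_nonneg (α := ℝ) Nn,
          hφc (hval h A), hφc (hval h Z), hφc (-(hval h B))]
      apply sInf_eq_of_dominated _ _ hbdd
      intro h
      by_cases hp : hval h A ≤ 0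
      · exact ⟨h, Or.inl (herrP h hp), le_refl _⟩
      by_cases hq : 0 < hval h B
      · exact ⟨h, Or.inr (herrN h hq), le_refl _⟩
      push_neg at hp hq
      obtain ⟨p, hpd⟩ : ∃ p : ℝ, p = hval h A := ⟨_, rfl⟩
      obtain ⟨q, hqd⟩ : ∃ q : ℝ, q = hval h B := ⟨_, rfl⟩
      rw [← hpd] at hp
      rw [← hqd] at hq
      have hp2 : p = h.1 0 + h.2 := by rw [hpd, hvA]
      have hq2 : q = -(h.1 0) + h.2 := by rw [hqd, hvB]
      refine ⟨(![-q/2, 0], q/2), Or.inl (herrP _ ?_), ?_⟩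
      · have e1 : hval (![-q/2, 0], q/2) A = 0 := by
          rw [hA]; simp [hval, Fin.sum_univ_two]; ring
        exact e1.le
      · rw [hrisk, hrisk]
        have e1 : hval (![-q/2, 0], q/2) A = 0 := by
          rw [hA]; simp [hval, Fin.sum_univ_two]; ring
        have e2 : hval (![-q/2, 0], q/2) B = q := by
          rw [hB]; simp [hval, Fin.sum_univ_two]; ring
        have e3 : hval (![-q/2, 0], q/2) Z = q*(T+1)/2 := by
          rw [hZ]; simp [hval, Fin.sum_univ_two]; ring
        have hzeq : hval h Z = q*(T+1)/2 - p*(T-1)/2 := by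
          rw [hvZ, hp2, hq2]; ring
        rw [e1, e2, e3, hzeq, ← hpd, ← hqd, h0]
        have hx₀ : q*(T+1)/2 ≤ 0 := by nlinarith [mul_nonneg (neg_nonneg.2 hq) (show (0:ℝ) ≤ T + 1 by linarith)]
        have hδ0 : 0 ≤ p*(T-1)/2 := by nlinarith [mul_nonneg hp.le (show (0:ℝ) ≤ T - 1 by linarith)]
        have h1 := lemA p hp
        have h2 := lemB (q*(T+1)/2) (p*(T-1)/2) hx₀ hδ0
        have h1' : (m:ℝ) - (m:ℝ) * (K * p) ≤ (m:ℝ) * φ p := by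
          nlinarith [h1, Nat.cast_nonneg (α := ℝ) m]
        have h3 : (m:ℝ) * (K * p) ≤ k * (p*(T-1)/2) := by
          have hTk : k * (T - 1) = 2 * ((m:ℝ)+1) * K := by
            have h5 : (2 * ((m:ℝ)+1) * K / k) * k = 2 * ((m:ℝ)+1) * K :=
              div_mul_cancel₀ _ (ne_of_gt hkpos)
            calc k * (T - 1) = (2 * ((m:ℝ)+1) * K / k) * k := by rw [hTdef]; ring
              _ = 2 * ((m:ℝ)+1) * K := h5
          have hked : k * (p*(T-1)/2) = p * ((m:ℝ)+1) * K := by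
            calc k * (p*(T-1)/2) = (k * (T-1)) * p / 2 := by ring
              _ = (2 * ((m:ℝ)+1) * K) * p / 2 := by rw [hTk]
              _ = p * ((m:ℝ)+1) * K := by ring
          rw [hked]
          nlinarith [hK0, hp.le]
        linarith [h1', h2, h3]
  · -- Case 2 : the attacker may move one negative point
    obtain ⟨n, rfl⟩ : ∃ n, Nn = n + 1 := ⟨Nn - 1, (Nat.succ_pred_eq_of_pos hNn).symm⟩
    obtain ⟨T, hTdef⟩ : ∃ T : ℝ, T = 1 + 2 * (Np:ℝ) * K / k := ⟨_, rfl⟩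
    have hT1 : (1:ℝ) ≤ T := by
      have h' : 0 ≤ 2 * (Np:ℝ) * K / k := by positivity
      rw [hTdef]; linarith
    obtain ⟨A, hA⟩ : ∃ v : Fin 2 → ℝ, v = ![1, 0] := ⟨_, rfl⟩
    obtain ⟨B, hB⟩ : ∃ v : Fin 2 → ℝ, v = ![-1, 0] := ⟨_, rfl⟩
    obtain ⟨Z, hZ⟩ : ∃ v : Fin 2 → ℝ, v = ![T, 0] := ⟨_, rfl⟩
    have hvA : ∀ h : (Fin 2 → ℝ) × ℝ, hval h A = h.1 0 + h.2 := by
      intro h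
      rw [hA]; simp [hval, Fin.sum_univ_two]
    have hvB : ∀ h : (Fin 2 → ℝ) × ℝ, hval h B = -(h.1 0) + h.2 := by
      intro h
      rw [hB]; simp [hval, Fin.sum_univ_two]
    have hvZ : ∀ h : (Fin 2 → ℝ) × ℝ, hval h Z = h.1 0 * T + h.2 := by
      intro h
      rw [hZ]; simp [hval, Fin.sum_univ_two]
    have hrisk : ∀ h : (Fin 2 → ℝ) × ℝ,
        risk φ h (Multiset.replicate Np A) (Multiset.replicate n B + {Z})
          = (Np:ℝ) * φ (hval h A) + ((n:ℝ) * φ (-(hval h B)) + φ (-(hval h Z))) := by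
      intro h
      simp [risk, Multiset.sum_replicate, nsmul_eq_mul]
    have herrP : ∀ h : (Fin 2 → ℝ) × ℝ, hval h A ≤ 0 →
        errPos h (Multiset.replicate Np A)
          = Multiset.card (Multiset.replicate Np A) := by
      intro h hh
      unfold errPos
      exact Multiset.countP_eq_card.2 fun a ha => by
        rw [Multiset.eq_of_mem_replicate ha]; exact hh
    have herrN : ∀ h : (Fin 2 → ℝ) × ℝ, 0 < hval h B →
        errNeg h (Multiset.replicate (n+1) B)
          = Multiset.card (Multiset.replicate (n+1) B) := by
      intro h hh
      unfold errNeg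
      exact Multiset.countP_eq_card.2 fun a ha => by
        rw [Multiset.eq_of_mem_replicate ha]; exact hh
    refine ⟨Multiset.replicate Np A, Multiset.replicate (n+1) B,
      Multiset.replicate Np A, Multiset.replicate n B + {Z}, by simp, by simp, by rw [hA, hB]; exact hsep,
      ⟨rfl, by simp, by simp, ?_⟩, ?_⟩
    · -- attack budget
      have hsub1 : Multiset.replicate n B + {Z} - Multiset.replicate (n+1) B ≤ {Z} := by
        calc Multiset.replicate n B + {Z} - Multiset.replicate (n+1) B
            ≤ Multiset.replicate n B + {Z} - Multiset.replicate n B :=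
              tsub_le_tsub_left ((Multiset.replicate_le_replicate B).2 (Nat.le_succ n)) _
          _ = {Z} := add_tsub_cancel_left _ _
      exact le_trans (Multiset.card_le_card hsub1) (by simpa using han1)
    · have hbdd : BddBelow (Set.range fun h : (Fin 2 → ℝ) × ℝ =>
          risk φ h (Multiset.replicate Np A) (Multiset.replicate n B + {Z})) := by
        refine ⟨(Np:ℝ) * c + ((n:ℝ) * c + c), ?_⟩
        rintro r ⟨h, rfl⟩
        dsimp only
        rw [hrisk h]
        nlinarith [Nat.cast_nonneg (α := ℝ) n, Nat.cast_nonneg (α := ℝ) Np,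
          hφc (hval h A), hφc (-(hval h Z)), hφc (-(hval h B))]
      apply sInf_eq_of_dominated _ _ hbdd
      intro h
      by_cases hp : hval h A ≤ 0
      · exact ⟨h, Or.inl (herrP h hp), le_refl _⟩
      by_cases hq : 0 < hval h B
      · exact ⟨h, Or.inr (herrN h hq), le_refl _⟩
      push_neg at hp hq
      obtain ⟨p, hpd⟩ : ∃ p : ℝ, p = hval h A := ⟨_, rfl⟩
      obtain ⟨q, hqd⟩ : ∃ q : ℝ, q = hval h B := ⟨_, rfl⟩
      rw [← hpd] at hp
      rw [← hqd] at hq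
      have hp2 : p = h.1 0 + h.2 := by rw [hpd, hvA]
      have hq2 : q = -(h.1 0) + h.2 := by rw [hqd, hvB]
      refine ⟨(![-q/2, 0], q/2), Or.inl (herrP _ ?_), ?_⟩
      · have e1 : hval (![-q/2, 0], q/2) A = 0 := by
          rw [hA]; simp [hval, Fin.sum_univ_two]; ring
        exact e1.le
      · rw [hrisk, hrisk]
        have e1 : hval (![-q/2, 0], q/2) A = 0 := by
          rw [hA]; simp [hval, Fin.sum_univ_two]; ring
        have e2 : hval (![-q/2, 0], q/2) B = q := by
          rw [hB]; simp [hval, Fin.sum_univ_two]; ring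
        have e3 : -(hval (![-q/2, 0], q/2) Z) = q*(T-1)/2 := by
          rw [hZ]; simp [hval, Fin.sum_univ_two]; ring
        have hzeq : -(hval h Z) = q*(T-1)/2 - p*(T+1)/2 := by
          rw [hvZ, hp2, hq2]; ring
        rw [e1, e2, e3, hzeq, ← hpd, ← hqd, h0]
        have hx₀ : q*(T-1)/2 ≤ 0 := by nlinarith [mul_nonneg (neg_nonneg.2 hq) (show (0:ℝ) ≤ T - 1 by linarith)]
        have hδ0 : 0 ≤ p*(T+1)/2 := by nlinarith [mul_nonneg hp.le (show (0:ℝ) ≤ T + 1 by linarith)]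
        have h1 := lemA p hp
        have h2 := lemB (q*(T-1)/2) (p*(T+1)/2) hx₀ hδ0
        have h1' : (Np:ℝ) - (Np:ℝ) * (K * p) ≤ (Np:ℝ) * φ p := by
          nlinarith [h1, Nat.cast_nonneg (α := ℝ) Np]
        have h3 : (Np:ℝ) * (K * p) ≤ k * (p*(T+1)/2) := by
          have hTk : k * (T + 1) = 2 * k + 2 * (Np:ℝ) * K := by
            have h5 : (2 * (Np:ℝ) * K / k) * k = 2 * (Np:ℝ) * K :=
              div_mul_cancel₀ _ (ne_of_gt hkpos)
            calc k * (T + 1) = (2 * (Np:ℝ) * K / k) * k + 2 * k := by rw [hTdef]; ring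
              _ = 2 * k + 2 * (Np:ℝ) * K := by rw [h5]; ring
          have hked : k * (p*(T+1)/2) = p * k + p * (Np:ℝ) * K := by
            calc k * (p*(T+1)/2) = (k * (T+1)) * p / 2 := by ring
              _ = (2 * k + 2 * (Np:ℝ) * K) * p / 2 := by rw [hTk]
              _ = p * k + p * (Np:ℝ) * K := by ring
          rw [hked]
          nlinarith [hK0, hp.le, hkpos.le]
        linarith [h1', h2, h3]
end

section
/- Let N⁺, N⁻ ≥ 1 be integers and α = (α⁺, α⁻) with α⁺ ≤ N⁺ and α⁻ ≤ N⁻. Suppose at least one of the following holds: (i) 2α⁺ ≥ N⁺; (ii) 2α⁻ ≥ N⁻; (iii) α⁺ + α⁻ ≥ N⁻; (iv) α⁺ + α⁻ ≥ N⁺. Then there exist a linearly separable training set (D⁺, D⁻) of feature vectors in ℝ² with card D⁺ = N⁺ and card D⁻ = N⁻, an α-bounded feature attack (E⁺, E⁻) on (D⁺, D⁻), and an affine classifier ĥ minimizing the total 0-1 error err⁺(h, E⁺) + err⁻(h, E⁻) over all affine classifiers h, such that ĥ misclassifies every element of D⁺ or misclassifies every element of D⁻. -/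
open scoped Classical BigOperators

/-! All points lie on the first axis, `D⁺` at `(1, 0)` and `D⁻` at `(-1, 0)`.

Under (iii) or (iv) the attacker moves `α⁺` positives to `(-1, 0)` and `α⁻` negatives to `(1, 0)`.
An affine function takes arbitrary signs at two points, so an error minimizer labels each of the two
points by the majority there, and the condition makes one of these majorities go against the clean
label of that point.

Under (i) the attacker moves `α⁺` positives to `(-2, 0)`, beyond the negatives. An affine function
positive at `-2` and at `1` is positive at `-1`, so a classifier gives up either one of the two
groups of positives (the one at `-2` is the larger) or all negatives; a minimizer therefore
misclassifies all of `D⁺` or all of `D⁻`. Case (ii) is the mirror image, with `α⁻` negatives moved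
to `(2, 0)`. -/

section Relocate

variable {α : Type*}

lemma Multiset.countP_replicate (p : α → Prop) [DecidablePred p] (n : ℕ) (a : α) :
    Multiset.countP p (Multiset.replicate n a) = if p a then n else 0 := by
  induction n with
  | zero => simp
  | succ n ih => rw [Multiset.replicate_succ, Multiset.countP_cons, ih]; split_ifs <;> omega

def relocate (n k : ℕ) (x y : α) : Multiset α :=
  Multiset.replicate (n - k) x + Multiset.replicate k y

lemma card_relocate {n k : ℕ} (hk : k ≤ n) (x y : α) :
    Multiset.card (relocate n k x y) = n := by
  simp only [relocate, Multiset.card_add, Multiset.card_replicate]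
  omega

lemma card_relocate_sub_replicate_le [DecidableEq α] (n k : ℕ) (x y : α) :
    Multiset.card (relocate n k x y - Multiset.replicate n x) ≤ k := by
  have hsub : relocate n k x y - Multiset.replicate n x ≤ Multiset.replicate k y := by
    rw [tsub_le_iff_right, relocate, add_comm (Multiset.replicate k y)]
    exact add_le_add_left ((Multiset.replicate_le_replicate x).2 (Nat.sub_le n k)) _
  simpa using Multiset.card_le_card hsub

end Relocate

section Errors

variable {p : ℕ}

noncomputable def totalErr (h : (Fin p → ℝ) × ℝ) (Ep En : Multiset (Fin p → ℝ)) : ℕ :=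
  errPos h Ep + errNeg h En

def IsERM (hhat : (Fin p → ℝ) × ℝ) (Ep En : Multiset (Fin p → ℝ)) : Prop :=
  ∀ h, totalErr hhat Ep En ≤ totalErr h Ep En

lemma errPos_add (h : (Fin p → ℝ) × ℝ) (s t : Multiset (Fin p → ℝ)) :
    errPos h (s + t) = errPos h s + errPos h t :=
  Multiset.countP_add _ _ _

lemma errNeg_add (h : (Fin p → ℝ) × ℝ) (s t : Multiset (Fin p → ℝ)) :
    errNeg h (s + t) = errNeg h s + errNeg h t :=
  Multiset.countP_add _ _ _

lemma errPos_replicate (h : (Fin p → ℝ) × ℝ) (n : ℕ) (x : Fin p → ℝ) :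
    errPos h (Multiset.replicate n x) = if hval h x ≤ 0 then n else 0 :=
  Multiset.countP_replicate _ n x

lemma errNeg_replicate (h : (Fin p → ℝ) × ℝ) (n : ℕ) (x : Fin p → ℝ) :
    errNeg h (Multiset.replicate n x) = if 0 < hval h x then n else 0 :=
  Multiset.countP_replicate _ n x

end Errors

def axisPt (c : ℝ) : Fin 2 → ℝ := ![c, 0]

def axisClf (a b : ℝ) : (Fin 2 → ℝ) × ℝ := (![a, 0], b)

lemma hval_axisPt (h : (Fin 2 → ℝ) × ℝ) (c : ℝ) : hval h (axisPt c) = h.1 0 * c + h.2 := by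
  simp [hval, axisPt, Fin.sum_univ_two]

lemma hval_axisClf_axisPt (a b c : ℝ) : hval (axisClf a b) (axisPt c) = a * c + b := by
  simp [hval_axisPt, axisClf]

lemma linSep_axis (Np Nn : ℕ) :
    LinSep (Multiset.replicate Np (axisPt 1)) (Multiset.replicate Nn (axisPt (-1))) :=
  ⟨axisClf 1 0, by norm_num [errPos_replicate, errNeg_replicate, hval_axisClf_axisPt]⟩

lemma exists_axis_sign_pattern (P Q : Prop) :
    ∃ h : (Fin 2 → ℝ) × ℝ, (hval h (axisPt 1) ≤ 0 ↔ P) ∧ (0 < hval h (axisPt (-1)) ↔ Q) := by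
  set u : ℝ := if P then -1 else 1
  set v : ℝ := if Q then 1 else -1
  refine ⟨axisClf ((u - v) / 2) ((u + v) / 2), ?_, ?_⟩
  · rw [hval_axisClf_axisPt, show (u - v) / 2 * 1 + (u + v) / 2 = u by ring]
    by_cases hP : P <;> simp [u, hP]
  · rw [hval_axisClf_axisPt, show (u - v) / 2 * -1 + (u + v) / 2 = v by ring]
    by_cases hQ : Q <;> simp [v, hQ]

section Attacks

variable (Np Nn ap an : ℕ)

lemma totalErr_relocate_both (h : (Fin 2 → ℝ) × ℝ) :
    totalErr h (relocate Np ap (axisPt 1) (axisPt (-1))) (relocate Nn an (axisPt (-1)) (axisPt 1)) =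
      (if hval h (axisPt 1) ≤ 0 then Np - ap else an) +
        (if 0 < hval h (axisPt (-1)) then Nn - an else ap) := by
  simp only [totalErr, relocate, errPos_add, errNeg_add, errPos_replicate, errNeg_replicate,
    ← not_le]
  split_ifs <;> omega

lemma exists_isERM_relocate_both (hcond : Nn ≤ ap + an ∨ Np ≤ ap + an) :
    ∃ hhat, IsERM hhat (relocate Np ap (axisPt 1) (axisPt (-1)))
        (relocate Nn an (axisPt (-1)) (axisPt 1)) ∧
      (hval hhat (axisPt 1) ≤ 0 ∨ 0 < hval hhat (axisPt (-1))) := by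
  obtain ⟨hhat, hpos, hneg⟩ := exists_axis_sign_pattern (Np - ap ≤ an) (Nn - an ≤ ap)
  refine ⟨hhat, fun h => ?_, ?_⟩
  · simp only [totalErr_relocate_both, hpos, hneg]
    split_ifs <;> omega
  · rw [hpos, hneg]
    omega

lemma totalErr_relocate_pos (h : (Fin 2 → ℝ) × ℝ) :
    totalErr h (relocate Np ap (axisPt 1) (axisPt (-2))) (Multiset.replicate Nn (axisPt (-1))) =
      (if hval h (axisPt 1) ≤ 0 then Np - ap else 0) + (if hval h (axisPt (-2)) ≤ 0 then ap else 0) +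
        (if 0 < hval h (axisPt (-1)) then Nn else 0) := by
  simp only [totalErr, relocate, errPos_add, errPos_replicate, errNeg_replicate]

lemma min_le_totalErr_relocate_pos (hap : Np ≤ 2 * ap) (h : (Fin 2 → ℝ) × ℝ) :
    min (Np - ap) Nn ≤
      totalErr h (relocate Np ap (axisPt 1) (axisPt (-2))) (Multiset.replicate Nn (axisPt (-1))) := by
  have hmid : 3 * hval h (axisPt (-1)) = 2 * hval h (axisPt (-2)) + hval h (axisPt 1) := by
    simp only [hval_axisPt]; ring
  rw [totalErr_relocate_pos]
  split_ifs <;> first | omega | linarith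

lemma exists_isERM_relocate_pos (hap : Np ≤ 2 * ap) :
    ∃ hhat, IsERM hhat (relocate Np ap (axisPt 1) (axisPt (-2)))
        (Multiset.replicate Nn (axisPt (-1))) ∧
      (hval hhat (axisPt 1) ≤ 0 ∨ 0 < hval hhat (axisPt (-1))) := by
  by_cases hle : Np - ap ≤ Nn
  · refine ⟨axisClf (-1) (-3 / 2), fun h => ?_, Or.inl (by norm_num [hval_axisClf_axisPt])⟩
    calc _ = Np - ap := by norm_num [totalErr_relocate_pos, hval_axisClf_axisPt]
      _ = min (Np - ap) Nn := (min_eq_left hle).symm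
      _ ≤ _ := min_le_totalErr_relocate_pos Np Nn ap hap h
  · refine ⟨axisClf 0 1, fun h => ?_, Or.inr (by norm_num [hval_axisClf_axisPt])⟩
    calc _ = Nn := by norm_num [totalErr_relocate_pos, hval_axisClf_axisPt]
      _ = min (Np - ap) Nn := (min_eq_right (by omega)).symm
      _ ≤ _ := min_le_totalErr_relocate_pos Np Nn ap hap h

lemma totalErr_relocate_neg (h : (Fin 2 → ℝ) × ℝ) :
    totalErr h (Multiset.replicate Np (axisPt 1)) (relocate Nn an (axisPt (-1)) (axisPt 2)) =
      (if hval h (axisPt 1) ≤ 0 then Np else 0) + ((if 0 < hval h (axisPt (-1)) then Nn - an else 0) +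
        (if 0 < hval h (axisPt 2) then an else 0)) := by
  simp only [totalErr, relocate, errNeg_add, errPos_replicate, errNeg_replicate]

lemma min_le_totalErr_relocate_neg (han : Nn ≤ 2 * an) (h : (Fin 2 → ℝ) × ℝ) :
    min (Nn - an) Np ≤
      totalErr h (Multiset.replicate Np (axisPt 1)) (relocate Nn an (axisPt (-1)) (axisPt 2)) := by
  have hmid : 3 * hval h (axisPt 1) = hval h (axisPt (-1)) + 2 * hval h (axisPt 2) := by
    simp only [hval_axisPt]; ring
  rw [totalErr_relocate_neg]
  split_ifs <;> first | omega | linarith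

lemma exists_isERM_relocate_neg (han : Nn ≤ 2 * an) :
    ∃ hhat, IsERM hhat (Multiset.replicate Np (axisPt 1))
        (relocate Nn an (axisPt (-1)) (axisPt 2)) ∧
      (hval hhat (axisPt 1) ≤ 0 ∨ 0 < hval hhat (axisPt (-1))) := by
  by_cases hle : Nn - an ≤ Np
  · refine ⟨axisClf (-1) (3 / 2), fun h => ?_, Or.inr (by norm_num [hval_axisClf_axisPt])⟩
    calc _ = Nn - an := by norm_num [totalErr_relocate_neg, hval_axisClf_axisPt]
      _ = min (Nn - an) Np := (min_eq_left hle).symm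
      _ ≤ _ := min_le_totalErr_relocate_neg Np Nn an han h
  · refine ⟨axisClf 0 (-1), fun h => ?_, Or.inl (by norm_num [hval_axisClf_axisPt])⟩
    calc _ = Np := by norm_num [totalErr_relocate_neg, hval_axisClf_axisPt]
      _ = min (Nn - an) Np := (min_eq_right (by omega)).symm
      _ ≤ _ := min_le_totalErr_relocate_neg Np Nn an han h

end Attacks

theorem stmt6_general (Np Nn ap an : ℕ)
    (hap : ap ≤ Np) (han : an ≤ Nn)
    (hcond : Np ≤ 2 * ap ∨ Nn ≤ 2 * an ∨ Nn ≤ ap + an ∨ Np ≤ ap + an) :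
    ∃ (Dp Dn Ep En : Multiset (Fin 2 → ℝ)) (hhat : (Fin 2 → ℝ) × ℝ),
      Multiset.card Dp = Np ∧ Multiset.card Dn = Nn ∧
      LinSep Dp Dn ∧ IsBFA ap an Dp Dn Ep En ∧
      (∀ h : (Fin 2 → ℝ) × ℝ,
        errPos hhat Ep + errNeg hhat En ≤ errPos h Ep + errNeg h En) ∧
      (errPos hhat Dp = Np ∨ errNeg hhat Dn = Nn) := by
  set Dp := Multiset.replicate Np (axisPt 1)
  set Dn := Multiset.replicate Nn (axisPt (-1))
  obtain ⟨Ep, En, hbfa, hhat, herm, hmis⟩ : ∃ Ep En, IsBFA ap an Dp Dn Ep En ∧ ∃ hhat,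
      IsERM hhat Ep En ∧ (hval hhat (axisPt 1) ≤ 0 ∨ 0 < hval hhat (axisPt (-1))) := by
    have hcardPos y : Multiset.card (relocate Np ap (axisPt 1) y) = Multiset.card Dp := by
      rw [card_relocate hap, Multiset.card_replicate]
    have hcardNeg y : Multiset.card (relocate Nn an (axisPt (-1)) y) = Multiset.card Dn := by
      rw [card_relocate han, Multiset.card_replicate]
    have hmovePos := card_relocate_sub_replicate_le Np ap (axisPt 1)
    have hmoveNeg := card_relocate_sub_replicate_le Nn an (axisPt (-1))
    rcases hcond with hcond | hcond | hcond
    · exact ⟨_, Dn, ⟨hcardPos _, rfl, hmovePos _, by simp⟩,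
        exists_isERM_relocate_pos Np Nn ap hcond⟩
    · exact ⟨Dp, _, ⟨rfl, hcardNeg _, by simp, hmoveNeg _⟩,
        exists_isERM_relocate_neg Np Nn an hcond⟩
    · exact ⟨_, _, ⟨hcardPos _, hcardNeg _, hmovePos _, hmoveNeg _⟩,
        exists_isERM_relocate_both Np Nn ap an hcond⟩
  refine ⟨Dp, Dn, Ep, En, hhat, Multiset.card_replicate _ _, Multiset.card_replicate _ _,
    linSep_axis Np Nn, hbfa, herm, ?_⟩
  exact hmis.imp (fun h => by simp [Dp, errPos_replicate, h])
    (fun h => by simp [Dn, errNeg_replicate, h])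

theorem stmt6 (Np Nn ap an : ℕ) (hNp : 1 ≤ Np) (hNn : 1 ≤ Nn)
    (hap : ap ≤ Np) (han : an ≤ Nn)
    (hcond : Np ≤ 2 * ap ∨ Nn ≤ 2 * an ∨ Nn ≤ ap + an ∨ Np ≤ ap + an) :
    ∃ (Dp Dn Ep En : Multiset (Fin 2 → ℝ)) (hhat : (Fin 2 → ℝ) × ℝ),
      Multiset.card Dp = Np ∧ Multiset.card Dn = Nn ∧
      LinSep Dp Dn ∧ IsBFA ap an Dp Dn Ep En ∧
      (∀ h : (Fin 2 → ℝ) × ℝ,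
        errPos hhat Ep + errNeg hhat En ≤ errPos h Ep + errNeg h En) ∧
      (errPos hhat Dp = Np ∨ errNeg hhat Dn = Nn) :=
  stmt6_general Np Nn ap an hap han hcond
end

section
/- Let (D⁺, D⁻) be linearly separable training data in ℝ^p with N⁺ = card D⁺ and N⁻ = card D⁻, let α = (α⁺, α⁻) satisfy 2α⁺ < N⁺ and 2α⁻ < N⁻, and let (E⁺, E⁻) be an α-bounded feature attack on (D⁺, D⁻). Then every affine classifier h* with err⁺(h*, D⁺) = 0 and err⁻(h*, D⁻) = 0 satisfies err⁺(h*, E⁺) ≤ α⁺ and err⁻(h*, E⁻) ≤ α⁻; in particular 2·err⁺(h*, E⁺) < N⁺ and 2·err⁻(h*, E⁻) < N⁻, so the set of affine classifiers satisfying the majority constraint on (E⁺, E⁻) is nonempty. -/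
open scoped Classical BigOperators

lemma errKey {p : ℕ} (P : (Fin p → ℝ) → Prop) [DecidablePred P]
    (D E : Multiset (Fin p → ℝ)) (hD : Multiset.countP P D = 0) :
    Multiset.countP P E ≤ Multiset.card (E - D) := by
  calc Multiset.countP P E ≤ Multiset.countP P (E - D + D) :=
        Multiset.countP_le_of_le _ le_tsub_add
    _ = Multiset.countP P (E - D) + Multiset.countP P D := Multiset.countP_add _ _ _
    _ ≤ Multiset.card (E - D) := by
        rw [hD]; simpa using Multiset.countP_le_card P (E - D)

theorem stmt7 {p : ℕ} (hp : 1 ≤ p)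
    (Dp Dn Ep En : Multiset (Fin p → ℝ)) (ap an : ℕ)
    (hsep : LinSep Dp Dn)
    (hap : 2 * ap < Multiset.card Dp) (han : 2 * an < Multiset.card Dn)
    (hBFA : IsBFA ap an Dp Dn Ep En) :
    (∀ hstar : (Fin p → ℝ) × ℝ, errPos hstar Dp = 0 → errNeg hstar Dn = 0 →
      errPos hstar Ep ≤ ap ∧ errNeg hstar En ≤ an ∧
      2 * errPos hstar Ep < Multiset.card Dp ∧
      2 * errNeg hstar En < Multiset.card Dn) ∧
    ∃ h : (Fin p → ℝ) × ℝ, Majority h Ep En := by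
  obtain ⟨hcp, hcn, hbp, hbn⟩ := hBFA
  have main : ∀ hstar : (Fin p → ℝ) × ℝ, errPos hstar Dp = 0 → errNeg hstar Dn = 0 →
      errPos hstar Ep ≤ ap ∧ errNeg hstar En ≤ an ∧
      2 * errPos hstar Ep < Multiset.card Dp ∧
      2 * errNeg hstar En < Multiset.card Dn := by
    intro hstar h1 h2
    have e1 : errPos hstar Ep ≤ ap := le_trans (errKey _ Dp Ep h1) hbp
    have e2 : errNeg hstar En ≤ an := le_trans (errKey _ Dn En h2) hbn
    exact ⟨e1, e2, lt_of_le_of_lt (by omega) hap, lt_of_le_of_lt (by omega) han⟩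
  refine ⟨main, ?_⟩
  obtain ⟨h, h1, h2⟩ := hsep
  obtain ⟨e1, e2, e3, e4⟩ := main h h1 h2
  exact ⟨h, by rw [hcp]; exact e3, by rw [hcn]; exact e4⟩
end

section
/- Let (D⁺, D⁻) be training data in ℝ^p with N⁺ = card D⁺ and N⁻ = card D⁻, let α = (α⁺, α⁻) satisfy 2α⁺ < N⁺ and 2α⁻ < N⁻, and let (E⁺, E⁻) be an α-bounded feature attack on (D⁺, D⁻). Then every affine classifier h satisfying the majority constraint on (E⁺, E⁻) satisfies err⁺(h, D⁺) < N⁺ and err⁻(h, D⁻) < N⁻; that is, h misclassifies strictly fewer than all positive feature vectors and strictly fewer than all negative feature vectors of the un-attacked training data. (Hence the majority 0-1 loss linear classification algorithm is resilient whenever 2α⁺ < N⁺ and 2α⁻ < N⁻.) -/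
open scoped Classical BigOperators

/-! An attack of budget `a` that keeps the size `N` of a class swaps out as many training points
as it brings in, so `h` misclassifies at most `a` more points of the clean data than of the attacked
data. Under the majority constraint it misclassifies fewer than `N / 2` attacked points, and
`2 a < N` bounds the rest by another `N / 2`. -/

namespace Multiset

variable {α : Type*} [DecidableEq α]

lemma card_sub_comm_of_card_eq {s t : Multiset α} (h : card s = card t) :
    card (s - t) = card (t - s) := by
  have hs : card (s - t) + card (s ∩ t) = card s := by rw [← card_add, sub_add_inter]
  have ht : card (t - s) + card (s ∩ t) = card t := by rw [inter_comm, ← card_add, sub_add_inter]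
  omega

lemma countP_le_countP_add_card_sub (q : α → Prop) [DecidablePred q] (s t : Multiset α) :
    countP q s ≤ countP q t + card (s - t) :=
  calc countP q s ≤ countP q (s - t + t) := countP_le_of_le q Multiset.le_sub_add
    _ = countP q (s - t) + countP q t := countP_add q _ _
    _ ≤ card (s - t) + countP q t := Nat.add_le_add_right (countP_le_card q _) _
    _ = countP q t + card (s - t) := Nat.add_comm _ _

lemma countP_lt_card_of_card_sub_le {q : α → Prop} [DecidablePred q] {s t : Multiset α} {a : ℕ}
    (hcard : card t = card s) (hsub : card (t - s) ≤ a) (ha : 2 * a < card s)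
    (hmaj : 2 * countP q t < card t) : countP q s < card s := by
  have := countP_le_countP_add_card_sub q s t
  rw [card_sub_comm_of_card_eq hcard.symm] at this
  omega

end Multiset

theorem stmt8_general {p : ℕ}
    (Dp Dn Ep En : Multiset (Fin p → ℝ)) (ap an : ℕ)
    (hap : 2 * ap < Multiset.card Dp) (han : 2 * an < Multiset.card Dn)
    (hBFA : IsBFA ap an Dp Dn Ep En) :
    ∀ h : (Fin p → ℝ) × ℝ, Majority h Ep En →
      errPos h Dp < Multiset.card Dp ∧ errNeg h Dn < Multiset.card Dn := by
  rintro h ⟨hmajPos, hmajNeg⟩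
  obtain ⟨hcardPos, hcardNeg, hsubPos, hsubNeg⟩ := hBFA
  exact ⟨Multiset.countP_lt_card_of_card_sub_le hcardPos hsubPos hap hmajPos,
    Multiset.countP_lt_card_of_card_sub_le hcardNeg hsubNeg han hmajNeg⟩

theorem stmt8 {p : ℕ} (hp : 1 ≤ p)
    (Dp Dn Ep En : Multiset (Fin p → ℝ)) (ap an : ℕ)
    (hap : 2 * ap < Multiset.card Dp) (han : 2 * an < Multiset.card Dn)
    (hBFA : IsBFA ap an Dp Dn Ep En) :
    ∀ h : (Fin p → ℝ) × ℝ, Majority h Ep En →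
      errPos h Dp < Multiset.card Dp ∧ errNeg h Dn < Multiset.card Dn :=
  stmt8_general Dp Dn Ep En ap an hap han hBFA
end

section
/- The worst-case resilience bound of the majority 0-1 loss linear classifier is tight in the regime 2(α⁺ + α⁻) ≤ N⁺ − 1: for all integers N⁺, N⁻ ≥ 1 and α = (α⁺, α⁻) with 2α⁺ < N⁺, 2α⁻ < N⁻, and 2(α⁺ + α⁻) ≤ N⁺ − 1, there exist a linearly separable training set (D⁺, D⁻) of feature vectors in ℝ² with card D⁺ = N⁺ and card D⁻ = N⁻, an α-bounded feature attack (E⁺, E⁻) on (D⁺, D⁻), and an affine classifier ĥ that satisfies the majority constraint on (E⁺, E⁻) and minimizes the total 0-1 error err⁺(h, E⁺) + err⁻(h, E⁻) among all affine classifiers h satisfying the majority constraint on (E⁺, E⁻), such that err⁺(ĥ, D⁺) = 2α⁺ + α⁻. -/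
open scoped Classical BigOperators

lemma countP_rep {α : Type*} (p : α → Prop) [DecidablePred p] (n : ℕ) (a : α) :
    Multiset.countP p (Multiset.replicate n a) = if p a then n else 0 := by
  induction n with
  | zero => simp
  | succ n ih => rw [Multiset.replicate_succ, Multiset.countP_cons, ih]; split <;> simp

lemma hval2 (h : (Fin 2 → ℝ) × ℝ) (x : Fin 2 → ℝ) :
    hval h x = h.1 0 * x 0 + h.1 1 * x 1 + h.2 := by
  simp [hval, Fin.sum_univ_two]

theorem stmt12 (Np Nn ap an : ℕ) (hNp : 1 ≤ Np) (hNn : 1 ≤ Nn)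
    (hap : 2 * ap < Np) (han : 2 * an < Nn)
    (hreg : 2 * (ap + an) ≤ Np - 1) :
    ∃ (Dp Dn Ep En : Multiset (Fin 2 → ℝ)) (hhat : (Fin 2 → ℝ) × ℝ),
      Multiset.card Dp = Np ∧ Multiset.card Dn = Nn ∧
      LinSep Dp Dn ∧ IsBFA ap an Dp Dn Ep En ∧
      Majority hhat Ep En ∧
      (∀ h : (Fin 2 → ℝ) × ℝ, Majority h Ep En →
        errPos hhat Ep + errNeg hhat En ≤ errPos h Ep + errNeg h En) ∧
      errPos hhat Dp = 2 * ap + an := by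
  have ht : 2 * ap + an ≤ Np := by omega
  have han' : an ≤ Nn := by omega
  set A : Fin 2 → ℝ := ![0, 0] with hA
  set C : Fin 2 → ℝ := ![2, 0] with hC
  set P : Fin 2 → ℝ := ![-1, 0] with hP
  set B : Fin 2 → ℝ := ![0, 1] with hB
  set Dp : Multiset (Fin 2 → ℝ) :=
    Multiset.replicate (2 * ap + an) C + Multiset.replicate (Np - (2 * ap + an)) B with hDp
  set Dn : Multiset (Fin 2 → ℝ) := Multiset.replicate Nn A with hDn
  set Ep : Multiset (Fin 2 → ℝ) :=
    Multiset.replicate ap P + Multiset.replicate (ap + an) C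
      + Multiset.replicate (Np - (2 * ap + an)) B with hEp
  set En : Multiset (Fin 2 → ℝ) :=
    Multiset.replicate an C + Multiset.replicate (Nn - an) A with hEn
  have cardDp : Multiset.card Dp = Np := by
    simp [hDp]; omega
  have cardEp : Multiset.card Ep = Np := by
    simp [hEp]; omega
  have cardEn : Multiset.card En = Nn := by
    simp [hEn]; omega
  have cardDn : Multiset.card Dn = Nn := by simp [hDn]
  -- values of A, C, P, B coordinates
  have vA0 : A 0 = 0 := rfl
  have vA1 : A 1 = 0 := rfl
  have vC0 : C 0 = 2 := rfl
  have vC1 : C 1 = 0 := rfl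
  have vP0 : P 0 = -1 := rfl
  have vP1 : P 1 = 0 := rfl
  have vB0 : B 0 = 0 := rfl
  have vB1 : B 1 = 1 := rfl
  refine ⟨Dp, Dn, Ep, En, (![-1, 1], 0), cardDp, cardDn, ?_, ?_, ?_, ?_, ?_⟩
  · -- LinSep
    refine ⟨(![1, 1], -(1/2)), ?_, ?_⟩
    · simp only [errPos, hDp, Multiset.countP_add, countP_rep, hval2]
      rw [vC0, vC1, vB0, vB1]
      norm_num
    · simp only [errNeg, hDn, countP_rep, hval2]
      rw [vA0, vA1]
      norm_num
  · -- IsBFA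
    refine ⟨by rw [cardEp, cardDp], by rw [cardEn, cardDn], ?_, ?_⟩
    · have hsplit : Dp = Multiset.replicate ap C +
          (Multiset.replicate (ap + an) C + Multiset.replicate (Np - (2 * ap + an)) B) := by
        rw [hDp, ← add_assoc, ← Multiset.replicate_add]
        congr 2
        omega
      have hsplit2 : Ep = Multiset.replicate ap P +
          (Multiset.replicate (ap + an) C + Multiset.replicate (Np - (2 * ap + an)) B) := by
        rw [hEp, add_assoc]
      rw [hsplit, hsplit2, add_tsub_add_eq_tsub_right]
      calc Multiset.card (Multiset.replicate ap P - Multiset.replicate ap C)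
          ≤ Multiset.card (Multiset.replicate ap P) :=
            Multiset.card_le_card (tsub_le_self)
        _ = ap := Multiset.card_replicate _ _
    · have hsplit : Dn = Multiset.replicate an A + Multiset.replicate (Nn - an) A := by
        rw [hDn, ← Multiset.replicate_add]
        congr 1
        omega
      rw [hsplit, hEn, add_tsub_add_eq_tsub_right]
      calc Multiset.card (Multiset.replicate an C - Multiset.replicate an A)
          ≤ Multiset.card (Multiset.replicate an C) :=
            Multiset.card_le_card (tsub_le_self)
        _ = an := Multiset.card_replicate _ _
  · -- Majority hhat
    constructor
    · rw [cardEp]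
      have : errPos (![-1, 1], 0) Ep = ap + an := by
        simp only [errPos, hEp, Multiset.countP_add, countP_rep, hval2]
        rw [vC0, vC1, vB0, vB1, vP0, vP1]
        norm_num
      rw [this]; omega
    · rw [cardEn]
      have : errNeg (![-1, 1], 0) En = 0 := by
        simp only [errNeg, hEn, Multiset.countP_add, countP_rep, hval2]
        rw [vC0, vC1, vA0, vA1]
        norm_num
      rw [this]; omega
  · -- optimality
    intro h hmaj
    have hEphat : errPos (![-1, 1], 0) Ep = ap + an := by
      simp only [errPos, hEp, Multiset.countP_add, countP_rep, hval2]
      rw [vC0, vC1, vB0, vB1, vP0, vP1]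
      norm_num
    have hEnhat : errNeg (![-1, 1], 0) En = 0 := by
      simp only [errNeg, hEn, Multiset.countP_add, countP_rep, hval2]
      rw [vC0, vC1, vA0, vA1]
      norm_num
    rw [hEphat, hEnhat]
    -- abbreviations for h values
    have hvA : hval h A = h.2 := by rw [hval2, vA0, vA1]; ring
    have hvC : hval h C = 2 * h.1 0 + h.2 := by rw [hval2, vC0, vC1]; ring
    have hvP : hval h P = -h.1 0 + h.2 := by rw [hval2, vP0, vP1]; ring
    have errNegEn : errNeg h En =
        (if 0 < hval h C then an else 0) + (if 0 < hval h A then Nn - an else 0) := by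
      simp only [errNeg, hEn, Multiset.countP_add, countP_rep]
    have errPosEp : errPos h Ep =
        ((if hval h P ≤ 0 then ap else 0) + (if hval h C ≤ 0 then ap + an else 0))
          + (if hval h B ≤ 0 then Np - (2 * ap + an) else 0) := by
      simp only [errPos, hEp, Multiset.countP_add, countP_rep]
    -- majority forces h(A) ≤ 0
    have hAle : hval h A ≤ 0 := by
      by_contra hpos
      push_neg at hpos
      have h1 : Nn - an ≤ errNeg h En := by
        rw [errNegEn, if_pos hpos]
        omega
      have h2 := hmaj.2
      rw [cardEn] at h2
      omega
    by_cases hCle : hval h C ≤ 0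
    · have : ap + an ≤ errPos h Ep := by
        rw [errPosEp, if_pos hCle]; omega
      omega
    · push_neg at hCle
      have hPle : hval h P ≤ 0 := by
        rw [hvP]; rw [hvA] at hAle; rw [hvC] at hCle; linarith
      have h1 : ap ≤ errPos h Ep := by
        rw [errPosEp, if_pos hPle]; omega
      have h2 : an ≤ errNeg h En := by
        rw [errNegEn, if_pos hCle]; omega
      omega
  · -- errPos hhat Dp = 2 * ap + an
    simp only [errPos, hDp, Multiset.countP_add, countP_rep, hval2]
    rw [vC0, vC1, vB0, vB1]
    norm_num
end
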